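/- arXiv:2410.06840 — 2 statements merged into one kernel-verified Lean document; each statement's English description precedes it below -/
import Mathlib

section
/- Let G = (V, E) be a finite simple graph, for each v ∈ V let X_v be a set, and let X ⊆ ∏_{v∈V} X_v be d-compatible with G. Let W ⊆ V be an induced forest of G with no isolated vertices, and let L ⊆ W be a set obtained by choosing, from each connected component of G[W], all of its leaves except exactly one. Then x_{L ∪ (V \ W)} d^{|W \ L|}-determines x_{W \ L}; in particular cdim(X) ≤ |V| − |W| + |L|. -/
/-!
Root each component of the forest `G[W]` at its leaf outside `L` and measure depth from it.
Every `u ∈ W \ L` has a child `v`: the root is a leaf, and any other vertex outside `L` has degree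
at least two, hence a neighbour besides its parent. The neighbours of `v` in `W` other than `u` are
deeper than `u`, so compatibility at `v` recovers `x_u` from `x_L`, `x_{V \ W}` and deeper
coordinates. Recovering `W \ L` from the deepest vertices upward costs a factor `d` per vertex.
-/

/-- `x_A` `d`-determines `x_B`. -/
def Determines {V : Type*} {F : V → Type*} (S : Set (∀ v, F v))
    (A B : Set V) (d : ℕ) : Prop :=
  ∀ c : ∀ a : A, F a,
    ((fun x : ∀ v, F v => fun b : B => x b) ''
      {x ∈ S | ∀ a : A, x a = c a}).encard ≤ (d : ℕ∞)

/-- `S` is `d`-compatible with the graph `G`. -/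
def Compatible {V : Type*} {F : V → Type*} (S : Set (∀ v, F v))
    (G : SimpleGraph V) (d : ℕ) : Prop :=
  ∀ v w, G.Adj v w →
    Determines S ((insert v (G.neighborSet v)) \ {w}) {w} d

/-- The combinatorial dimension of `S`. -/
noncomputable def cdim {V : Type*} {F : V → Type*} (S : Set (∀ v, F v)) : ℕ :=
  sInf {n : ℕ | ∃ A : Set V, A.ncard = n ∧ ∃ d : ℕ, Determines S A Set.univ d}

theorem Set.encard_le_mul_of_encard_image_le {α β : Type*} (s : Set α) (f : α → β) {m n : ℕ}
    (himage : (f '' s).encard ≤ m) (hfiber : ∀ b, (s ∩ f ⁻¹' {b}).encard ≤ n) :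
    s.encard ≤ (m * n : ℕ) := by
  classical
  have hfin : (f '' s).Finite := Set.finite_of_encard_le_coe himage
  have hcard : hfin.toFinset.card ≤ m := by
    rwa [hfin.encard_eq_coe_toFinset_card, Nat.cast_le] at himage
  have hcover : s ⊆ ⋃ b ∈ hfin.toFinset, s ∩ f ⁻¹' {b} := fun x hx =>
    Set.mem_biUnion (hfin.mem_toFinset.mpr (Set.mem_image_of_mem f hx)) ⟨hx, rfl⟩
  calc s.encard ≤ ∑ b ∈ hfin.toFinset, (s ∩ f ⁻¹' {b}).encard :=
        (Set.encard_le_encard hcover).trans (Finset.set_encard_biUnion_le _ _)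
    _ ≤ hfin.toFinset.card • (n : ℕ∞) := Finset.sum_le_card_nsmul _ _ _ fun b _ => hfiber b
    _ ≤ (m * n : ℕ) := by
        rw [nsmul_eq_mul]; exact_mod_cast Nat.mul_le_mul_right n hcard

section Determines

variable {V : Type*} {F : V → Type*} {S : Set (∀ v, F v)}

theorem Determines.mono_left {A A' B : Set V} {d : ℕ} (h : Determines S A B d)
    (hA : A ⊆ A') : Determines S A' B d := by
  intro c
  refine (Set.encard_le_encard (Set.image_mono ?_)).trans (h fun a => c ⟨a, hA a.2⟩)
  exact fun x hx => ⟨hx.1, fun a => hx.2 ⟨a, hA a.2⟩⟩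

theorem determines_of_subset {A B : Set V} (h : B ⊆ A) : Determines S A B 1 := by
  intro c
  refine Set.encard_le_one_iff.mpr ?_
  rintro - - ⟨x, ⟨-, hx⟩, rfl⟩ ⟨y, ⟨-, hy⟩, rfl⟩
  funext b
  exact (hx ⟨b, h b.2⟩).trans (hy ⟨b, h b.2⟩).symm

theorem Determines.chain {A B C : Set V} {d₁ d₂ : ℕ}
    (h₁ : Determines S A B d₁) (h₂ : Determines S (A ∪ B) C d₂) :
    Determines S A (B ∪ C) (d₁ * d₂) := by
  intro c
  set T := (B ∪ C).domRestrict '' {x ∈ S | ∀ a : A, x a = c a}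
  refine Set.encard_le_mul_of_encard_image_le T (Set.domRestrict₂ Set.subset_union_left) ?_ ?_
  · rw [Set.image_image]
    exact h₁ c
  intro y
  rcases (T ∩ Set.domRestrict₂ Set.subset_union_left ⁻¹' {y}).eq_empty_or_nonempty with hT | hT
  · simp [hT]
  obtain ⟨-, ⟨x₀, ⟨-, hx₀⟩, rfl⟩, rfl⟩ := hT
  have hinj : Set.InjOn (Set.domRestrict₂ Set.subset_union_right)
      (T ∩ Set.domRestrict₂ Set.subset_union_left ⁻¹' {Set.domRestrict₂ Set.subset_union_left
        ((B ∪ C).domRestrict x₀)}) := by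
    rintro z ⟨-, hzB⟩ z' ⟨-, hz'B⟩ hC
    funext ⟨v, hv⟩
    rcases hv with hv | hv
    · exact (congrFun hzB ⟨v, hv⟩).trans (congrFun hz'B ⟨v, hv⟩).symm
    · exact congrFun hC ⟨v, hv⟩
  refine (hinj.encard_image.symm.trans_le (Set.encard_le_encard ?_)).trans
    (h₂ ((A ∪ B).domRestrict x₀))
  rintro - ⟨-, ⟨⟨x, ⟨hxS, hx⟩, rfl⟩, hxB⟩, rfl⟩
  refine ⟨x, ⟨hxS, ?_⟩, rfl⟩
  rintro ⟨v, hv | hv⟩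
  · exact (hx ⟨v, hv⟩).trans (hx₀ ⟨v, hv⟩).symm
  · exact congrFun hxB ⟨v, hv⟩

theorem Determines.union_self_left {A B : Set V} {d : ℕ} (h : Determines S A B d) :
    Determines S A (A ∪ B) d := by
  simpa using (determines_of_subset subset_rfl).chain (h.mono_left Set.subset_union_left)

theorem determines_pow_ncard_of_rank {A B : Set V} (hB : B.Finite) (r : V → ℕ) {d : ℕ}
    (h : ∀ u ∈ B, Determines S (A ∪ {b ∈ B | r u < r b}) {u} d) :
    Determines S A B (d ^ B.ncard) := by
  classical
  lift B to Finset V using hB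
  rw [Set.ncard_coe_finset]
  induction B using Finset.induction_on_min_value r with
  | empty => simpa using determines_of_subset (Set.empty_subset A)
  | insert u B hu hmin ih =>
    have hB : Determines S A B (d ^ B.card) := by
      refine ih fun w hw => (h w (by simp [hw])).mono_left ?_
      rintro b (hb | ⟨hb, hwb⟩)
      · exact Or.inl hb
      · obtain rfl | hb := Finset.mem_insert.mp hb
        · exact absurd (hmin w hw) (not_le.mpr hwb)
        · exact Or.inr ⟨hb, hwb⟩
    have hu' : Determines S (A ∪ B) {u} d := by
      refine (h u (by simp)).mono_left ?_
      rintro b (hb | ⟨hb, hub⟩)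
      · exact Or.inl hb
      · obtain rfl | hb := Finset.mem_insert.mp hb
        · exact absurd hub (lt_irrefl _)
        · exact Or.inr hb
    rw [Finset.card_insert_of_notMem hu, pow_succ, Finset.coe_insert, Set.insert_eq,
      Set.union_comm]
    exact hB.chain hu'

theorem cdim_le_ncard {A : Set V} {d : ℕ} (h : Determines S A Set.univ d) : cdim S ≤ A.ncard :=
  Nat.sInf_le ⟨A, rfl, d, h⟩

end Determines

namespace SimpleGraph.IsAcyclic

variable {V : Type*} {G : SimpleGraph V} {r u v : V}

theorem eq_of_adj_of_dist_add_one (hG : G.IsAcyclic) (hr : G.Reachable r v) {a b : V}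
    (ha : G.Adj v a) (hb : G.Adj v b) (hda : G.dist r a + 1 = G.dist r v)
    (hdb : G.dist r b + 1 = G.dist r v) : a = b := by
  classical
  obtain ⟨q, hq, -⟩ := hr.exists_path_of_dist
  have eq_penultimate : ∀ a, G.Adj v a → G.dist r a + 1 = G.dist r v → a = q.penultimate := by
    intro a ha hda
    by_cases haq : a ∈ q.support
    · exact hG.eq_penultimate_of_adj_end hq ha haq
    obtain ⟨p, hp, hpl⟩ := (hr.trans ha.reachable).exists_path_of_dist
    have hvp : v ∈ p.support := hG.mem_support_of_ne_mem_support_of_adj_of_isPath hp hq ha.symm haq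
    have := (dist_le (p.takeUntil v hvp)).trans (p.length_takeUntil_le_length hvp)
    omega
  rw [eq_penultimate a ha hda, eq_penultimate b hb hdb]

theorem exists_adj_dist_eq_add_one (hG : G.IsAcyclic) (hr : G.Reachable r u) {a b : V}
    (ha : G.Adj u a) (hb : G.Adj u b) (hab : a ≠ b) :
    ∃ v, G.Adj u v ∧ G.dist r v = G.dist r u + 1 := by
  rcases hG.dist_eq_dist_add_one_of_adj_of_reachable r ha hr with hda | hda
  · rcases hG.dist_eq_dist_add_one_of_adj_of_reachable r hb hr with hdb | hdb
    · exact absurd (hG.eq_of_adj_of_dist_add_one hr ha hb hda.symm hdb.symm) hab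
    · exact ⟨b, hb, hdb⟩
  · exact ⟨a, ha, hda⟩

theorem dist_eq_add_one_of_adj_of_ne (hG : G.IsAcyclic) (hr : G.Reachable r u) (huv : G.Adj u v)
    (hv : G.dist r v = G.dist r u + 1) {y : V} (hvy : G.Adj v y) (hyu : y ≠ u) :
    G.dist r y = G.dist r v + 1 := by
  rcases hG.dist_eq_dist_add_one_of_adj_of_reachable r hvy (hr.trans huv.reachable) with h | h
  · exact absurd (hG.eq_of_adj_of_dist_add_one (hr.trans huv.reachable) hvy huv.symm h.symm
      hv.symm) hyu
  · exact h

end SimpleGraph.IsAcyclic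

/-- The height is the depth in the component of `G[W]` rooted at its leaf outside `L`. -/
theorem exists_height_of_induce_isAcyclic {V : Type*} {G : SimpleGraph V} {W L : Set V}
    (hforest : (G.induce W).IsAcyclic) (hniso : ∀ v ∈ W, (G.neighborSet v ∩ W).Nonempty)
    (hchoice : ∀ v : W, ∃! w : W, (G.induce W).Reachable v w ∧
      (G.neighborSet (w : V) ∩ W).ncard = 1 ∧ (w : V) ∉ L) :
    ∃ height : V → ℕ, ∀ u ∈ W \ L, ∃ v, G.Adj u v ∧
      ∀ y ∈ insert v (G.neighborSet v) \ {u}, y ∈ W → height u < height y := by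
  classical
  set H := G.induce W
  choose root hroot hroot_unique using hchoice
  have root_eq : ∀ {a b : W}, H.Reachable a b → root b = root a := fun {a b} hab =>
    hroot_unique _ _ ⟨hab.trans (hroot b).1, (hroot b).2⟩
  refine ⟨fun x => if hx : x ∈ W then H.dist (root ⟨x, hx⟩) ⟨x, hx⟩ else 0, ?_⟩
  rintro u ⟨huW, huL⟩
  set u' : W := ⟨u, huW⟩
  have hr : H.Reachable (root u') u' := (hroot u').1.symm
  obtain ⟨v, huv, hv⟩ : ∃ v, H.Adj u' v ∧ H.dist (root u') v = H.dist (root u') u' + 1 := by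
    rcases (hniso u huW).exists_eq_singleton_or_nontrivial with ⟨a, ha⟩ | ⟨a, ha, b, hb, hab⟩
    · have hu_root : u' = root u' :=
        hroot_unique u' u' ⟨.refl u', by rw [ha, Set.ncard_singleton], huL⟩
      have ha' : a ∈ G.neighborSet u ∩ W := ha ▸ rfl
      refine ⟨⟨a, ha'.2⟩, ha'.1, ?_⟩
      rw [← hu_root, SimpleGraph.dist_self, SimpleGraph.dist_eq_one_iff_adj]
      exact ha'.1
    · exact hforest.exists_adj_dist_eq_add_one (a := ⟨a, ha.2⟩) (b := ⟨b, hb.2⟩) hr ha.1 hb.1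
        (by simpa using hab)
  refine ⟨v, huv, ?_⟩
  rintro y ⟨hy, hyu⟩ hyW
  have hyu' : (⟨y, hyW⟩ : W) ≠ u' := fun h => hyu (congrArg Subtype.val h)
  simp only [dif_pos huW, dif_pos hyW]
  change H.dist (root u') u' < H.dist (root ⟨y, hyW⟩) ⟨y, hyW⟩
  rcases hy with rfl | hvy
  · change _ < H.dist (root v) v
    rw [root_eq huv.reachable]
    omega
  · have hvy' : H.Adj v ⟨y, hyW⟩ := hvy
    rw [root_eq (huv.reachable.trans hvy'.reachable),
      hforest.dist_eq_add_one_of_adj_of_ne hr huv hv hvy' hyu']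
    omega

theorem forest_bound_general {V : Type*} [Fintype V] (G : SimpleGraph V)
    {F : V → Type*} (S : Set (∀ v, F v)) (d : ℕ)
    (hcomp : Compatible S G d)
    (W : Set V)
    (hforest : (G.induce W).IsAcyclic)
    (hniso : ∀ v ∈ W, (G.neighborSet v ∩ W).Nonempty)
    (L : Set V)
    (hchoice : ∀ v : W, ∃! w : W, (G.induce W).Reachable v w ∧
      (G.neighborSet (w : V) ∩ W).ncard = 1 ∧ (w : V) ∉ L) :
    Determines S (L ∪ Wᶜ) (W \ L) (d ^ (W \ L).ncard) ∧
      cdim S ≤ Fintype.card V - W.ncard + L.ncard := by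
  obtain ⟨height, hheight⟩ := exists_height_of_induce_isAcyclic hforest hniso hchoice
  have hdet : Determines S (L ∪ Wᶜ) (W \ L) (d ^ (W \ L).ncard) := by
    refine determines_pow_ncard_of_rank (Set.toFinite _) height fun u hu => ?_
    obtain ⟨v, huv, hv⟩ := hheight u hu
    refine (hcomp v u huv.symm).mono_left fun y hy => ?_
    by_cases hyW : y ∈ W
    · by_cases hyL : y ∈ L
      · exact Or.inl (Or.inl hyL)
      · exact Or.inr ⟨⟨hyW, hyL⟩, hv y hy hyW⟩
    · exact Or.inl (Or.inr hyW)
  have hcover : L ∪ Wᶜ ∪ (W \ L) = Set.univ := by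
    ext x
    by_cases x ∈ W <;> by_cases x ∈ L <;> simp [*]
  have hcompl : W.ncard + Wᶜ.ncard = Fintype.card V := by
    rw [Set.ncard_add_ncard_compl, Nat.card_eq_fintype_card]
  refine ⟨hdet, ?_⟩
  calc cdim S ≤ (L ∪ Wᶜ).ncard := cdim_le_ncard (hcover ▸ hdet.union_self_left)
    _ ≤ L.ncard + Wᶜ.ncard := Set.ncard_union_le _ _
    _ = Fintype.card V - W.ncard + L.ncard := by omega

/-- Forest Bound: let `S` be `d`-compatible with `G`, let `W` be an induced
forest of `G` without isolated vertices, and let `L ⊆ W` consist of leaves of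
`G[W]` so that from each connected component of `G[W]` exactly one leaf is
excluded from `L`.  Then `x_{L ∪ (V \ W)}` `d^{|W \ L|}`-determines `x_{W \ L}`;
in particular `cdim S ≤ |V| - |W| + |L|`. -/
theorem forest_bound {V : Type*} [Fintype V] (G : SimpleGraph V)
    {F : V → Type*} (S : Set (∀ v, F v)) (d : ℕ)
    (hcomp : Compatible S G d)
    (W : Set V)
    (hforest : (G.induce W).IsAcyclic)
    (hniso : ∀ v ∈ W, (G.neighborSet v ∩ W).Nonempty)
    (L : Set V) (hLW : L ⊆ W)
    (hleaf : ∀ v ∈ L, (G.neighborSet v ∩ W).ncard = 1)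
    (hchoice : ∀ v : W, ∃! w : W, (G.induce W).Reachable v w ∧
      (G.neighborSet (w : V) ∩ W).ncard = 1 ∧ (w : V) ∉ L) :
    Determines S (L ∪ Wᶜ) (W \ L) (d ^ (W \ L).ncard) ∧
      cdim S ≤ Fintype.card V - W.ncard + L.ncard :=
  forest_bound_general G S d hcomp W hforest hniso L hchoice
end

section
/- Let 0 < ε < 1 and let G = (V, E) be a finite simple graph. Suppose G contains an induced forest W ⊆ V without isolated vertices, with l leaves and c connected components, such that |W| − l + c ≥ ε·|V|. Let ℓ be the number of distinct eigenvalues of the Laplacian matrix of G. Then ℓ ≥ 1/(1 − ε). -/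
/-!
Let `S` consist of the vertices outside `W` together with all leaves of the forest `G[W]` except
one chosen leaf `r` in each component. An eigenvector `x` of the Laplacian vanishing on `S`
vanishes identically: on `W` the eigen-equation at a vertex `u` with `x u = 0` says that the
values of `x` at the neighbours of `u` in `W` sum to zero, and going from the vertices farthest
from `r` towards `r`, each vertex is the only neighbour of one of its children whose value is
not yet known to vanish. Hence every eigenspace has dimension at most
`|S| = |V| - |W| + l - c ≤ (1 - ε) |V|`, and since the Laplacian is symmetric its eigenspaces
add up to dimension `|V|`, so `|V| ≤ ℓ (1 - ε) |V|`.
-/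

open Module Module.End Finset SimpleGraph

namespace Matrix

variable {V K : Type*} [Fintype V] [DecidableEq V]

lemma finrank_eigenspace_toLin'_le_card [Field K] (M : Matrix V V K) (μ : K) (S : Finset V)
    (hS : ∀ x ∈ eigenspace (toLin' M) μ, (∀ v ∈ S, x v = 0) → x = 0) :
    finrank K (eigenspace (toLin' M) μ) ≤ #S := by
  let restrict : (V → K) →ₗ[K] (S → K) := LinearMap.funLeft K K Subtype.val
  have hinj : Function.Injective (restrict ∘ₗ (eigenspace (toLin' M) μ).subtype) := by
    rw [← LinearMap.ker_eq_bot, LinearMap.ker_eq_bot']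
    intro x hx
    exact Subtype.ext <| hS x x.2 fun v hv => congrFun hx ⟨v, hv⟩
  simpa using LinearMap.finrank_le_finrank_of_injective hinj

namespace IsHermitian

variable {M : Matrix V V ℝ}

lemma card_filter_eigenvalues_le_finrank_eigenspace (hM : M.IsHermitian) (μ : ℝ) :
    #{i | hM.eigenvalues i = μ} ≤ finrank ℝ (eigenspace (toLin' M) μ) := by
  let b : {i // hM.eigenvalues i = μ} → V → ℝ := fun i => ⇑(hM.eigenvectorBasis i)
  have hb : LinearIndependent ℝ b :=
    (hM.eigenvectorBasis.toBasis.linearIndependent.map' _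
      (WithLp.linearEquiv 2 ℝ (V → ℝ)).ker).comp Subtype.val Subtype.val_injective
  have hspan : Submodule.span ℝ (Set.range b) ≤ eigenspace (toLin' M) μ := by
    rw [Submodule.span_le]
    rintro _ ⟨i, rfl⟩
    rw [SetLike.mem_coe, mem_eigenspace_iff, toLin'_apply, hM.mulVec_eigenvectorBasis, i.2]
  rw [← Fintype.card_subtype, ← finrank_span_eq_card hb]
  exact Submodule.finrank_mono hspan

lemma hasEigenvalue_eigenvalues (hM : M.IsHermitian) (i : V) :
    HasEigenvalue (toLin' M) (hM.eigenvalues i) :=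
  hasEigenvalue_of_hasEigenvector
    ⟨by rw [mem_eigenspace_iff, toLin'_apply, hM.mulVec_eigenvectorBasis],
      fun h => hM.eigenvectorBasis.toBasis.ne_zero i (by simpa using h)⟩

lemma card_le_ncard_setOf_hasEigenvalue_mul_card (hM : M.IsHermitian) (S : Finset V)
    (hS : ∀ μ, ∀ x ∈ eigenspace (toLin' M) μ, (∀ v ∈ S, x v = 0) → x = 0) :
    Fintype.card V ≤ {μ | HasEigenvalue (toLin' M) μ}.ncard * #S := by
  have hsub : (univ.image hM.eigenvalues : Set ℝ) ⊆ {μ | HasEigenvalue (toLin' M) μ} := by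
    simpa [Set.range_subset_iff] using hM.hasEigenvalue_eigenvalues
  calc Fintype.card V = ∑ μ ∈ univ.image hM.eigenvalues, #{i | hM.eigenvalues i = μ} :=
        card_eq_sum_card_image _ _
    _ ≤ ∑ _ ∈ univ.image hM.eigenvalues, #S := by
        refine sum_le_sum fun μ _ => ?_
        exact (hM.card_filter_eigenvalues_le_finrank_eigenspace μ).trans
          (finrank_eigenspace_toLin'_le_card M μ S (hS μ))
    _ ≤ {μ | HasEigenvalue (toLin' M) μ}.ncard * #S := by
        rw [sum_const, smul_eq_mul, ← Set.ncard_coe_finset]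
        exact Nat.mul_le_mul_right _ (Set.ncard_le_ncard hsub (finite_hasEigenvalue _))

end IsHermitian

end Matrix

namespace SimpleGraph

variable {α : Type*} {H : SimpleGraph α}

lemma IsAcyclic.eq_of_adj_of_dist_add_one_eq (hH : H.IsAcyclic) {r v u₁ u₂ : α}
    (h₁ : H.Adj u₁ v) (h₂ : H.Adj u₂ v) (hr : H.Reachable r v)
    (d₁ : H.dist r u₁ + 1 = H.dist r v) (d₂ : H.dist r u₂ + 1 = H.dist r v) : u₁ = u₂ := by
  classical
  obtain ⟨q, hq, -⟩ := hr.exists_path_of_dist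
  -- A neighbour of `v` closer to `r` lies on every path from `r` to `v`, just before `v`.
  have eq_penultimate : ∀ u, H.Adj u v → H.dist r u + 1 = H.dist r v → u = q.penultimate := by
    intro u hu hd
    obtain ⟨p, hp, hpl⟩ := (hr.trans hu.symm.reachable).exists_path_of_dist
    have hv : v ∉ p.support := fun hv => by
      have := (dist_le (p.takeUntil v hv)).trans (p.length_takeUntil_le_length hv)
      omega
    exact hH.eq_penultimate_of_adj_end hq hu.symm
      (hH.mem_support_of_ne_mem_support_of_adj_of_isPath hq hp hu.symm hv)
  rw [eq_penultimate u₁ h₁ d₁, eq_penultimate u₂ h₂ d₂]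

variable [Fintype α] [DecidableRel H.Adj]

lemma IsAcyclic.exists_adj_dist_eq_dist_add_one (hH : H.IsAcyclic) {r v : α}
    (hr : H.Reachable r v) (hpos : 0 < H.degree v) (hv : v = r ∨ H.degree v ≠ 1) :
    ∃ u, H.Adj v u ∧ H.dist r u = H.dist r v + 1 := by
  by_contra! hfar
  have hparent : ∀ u, H.Adj v u → H.dist r u + 1 = H.dist r v := fun u hu =>
    ((hH.dist_eq_dist_add_one_of_adj_of_reachable r hu hr).resolve_right (hfar u hu)).symm
  rcases hv with rfl | hv
  · obtain ⟨u, hu⟩ := (H.degree_pos_iff_exists_adj v).1 hpos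
    simpa using hparent u hu
  · have : H.degree v ≤ 1 := card_le_one.2 fun a ha b hb => by
      rw [mem_neighborFinset] at ha hb
      exact hH.eq_of_adj_of_dist_add_one_eq ha.symm hb.symm hr (hparent a ha) (hparent b hb)
    omega

lemma IsAcyclic.exists_degree_eq_one (hH : H.IsAcyclic) (hdeg : ∀ u, 0 < H.degree u)
    (C : H.ConnectedComponent) : ∃ v, H.connectedComponentMk v = C ∧ H.degree v = 1 := by
  classical
  obtain ⟨r, rfl⟩ := C.exists_rep
  obtain ⟨v, hv, hmax⟩ := exists_max_image {v | H.Reachable r v} (H.dist r) ⟨r, by simp⟩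
  rw [mem_filter_univ] at hv
  refine ⟨v, (ConnectedComponent.sound hv).symm, ?_⟩
  by_contra hv1
  obtain ⟨u, hvu, hu⟩ := hH.exists_adj_dist_eq_dist_add_one hv (hdeg v) (.inr hv1)
  have := hmax u ((mem_filter_univ _).2 (hv.trans hvu.reachable))
  omega

lemma IsAcyclic.eq_zero_of_reachable {M : Type*} [AddCommMonoid M] (hH : H.IsAcyclic)
    (hdeg : ∀ u, 0 < H.degree u) {r : α} {y : α → M}
    (hy : ∀ u, y u = 0 → ∑ w ∈ H.neighborFinset u, y w = 0)
    (hleaf : ∀ u, H.Reachable r u → u ≠ r → H.degree u = 1 → y u = 0)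
    {v : α} (hv : H.Reachable r v) : y v = 0 := by
  classical
  by_contra hne
  -- Take a nonzero value farthest from `r`; the equation at a child `u` of `v` isolates `y v`.
  obtain ⟨v, hv, hmax⟩ := exists_max_image {v | H.Reachable r v ∧ y v ≠ 0} (H.dist r)
    ⟨v, (mem_filter_univ _).2 ⟨hv, hne⟩⟩
  rw [mem_filter_univ] at hv
  have hfar : ∀ w, H.Reachable r w → H.dist r v < H.dist r w → y w = 0 := fun w hw hlt => by
    by_contra hw0
    have := hmax w ((mem_filter_univ _).2 ⟨hw, hw0⟩)
    omega
  obtain ⟨u, hvu, hu⟩ := hH.exists_adj_dist_eq_dist_add_one hv.1 (hdeg v) <| by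
    by_contra! h
    exact hv.2 (hleaf v hv.1 h.1 h.2)
  have hru := hv.1.trans hvu.reachable
  have hsum : ∑ w ∈ H.neighborFinset u, y w = y v := by
    refine sum_eq_single_of_mem v ((mem_neighborFinset _ _ _).2 hvu.symm) fun w hw hwv => ?_
    rw [mem_neighborFinset] at hw
    rcases hH.dist_eq_dist_add_one_of_adj_of_reachable r hw hru with h | h
    · exact absurd (hH.eq_of_adj_of_dist_add_one_eq hw.symm hvu hru h.symm hu.symm) hwv
    · exact hfar w (hru.trans hw.reachable) (by omega)
  exact hv.2 (hsum ▸ hy u (hfar u hru (by omega)))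

lemma IsAcyclic.eq_zero_of_forall_degree_eq_one {M : Type*} [AddCommMonoid M]
    (hH : H.IsAcyclic) (hdeg : ∀ u, 0 < H.degree u) (root : H.ConnectedComponent → α)
    (hroot : ∀ C, H.connectedComponentMk (root C) = C) {y : α → M}
    (hy : ∀ u, y u = 0 → ∑ w ∈ H.neighborFinset u, y w = 0)
    (hleaf : ∀ u, H.degree u = 1 → u ∉ Set.range root → y u = 0) : y = 0 := by
  funext v
  have hreach : ∀ {u}, H.Reachable (root (H.connectedComponentMk v)) u ↔
      H.connectedComponentMk u = H.connectedComponentMk v := by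
    intro u
    rw [← ConnectedComponent.eq, hroot, eq_comm]
  refine hH.eq_zero_of_reachable hdeg hy (fun u hu hne hu1 => hleaf u hu1 ?_) (hreach.2 rfl)
  rintro ⟨C, rfl⟩
  rw [hreach, hroot] at hu
  exact hne (by rw [hu])

section InducedForest

variable {V : Type*} [Fintype V] [DecidableEq V] (G : SimpleGraph V) [DecidableRel G.Adj]
  {W : Set V} [DecidablePred (· ∈ W)]

lemma degree_induce_eq_ncard (u : W) : (G.induce W).degree u = (G.neighborSet u ∩ W).ncard := by
  rw [← card_neighborFinset_eq_degree, ← card_map (.subtype (· ∈ W)), map_neighborFinset_induce,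
    Set.ncard_eq_toFinset_card', Set.toFinset_inter, neighborFinset_def]

lemma sum_neighborFinset_induce {M : Type*} [AddCommMonoid M] {x : V → M}
    (hx : ∀ v ∉ W, x v = 0) (u : W) :
    ∑ w ∈ (G.induce W).neighborFinset u, x w = ∑ w ∈ G.neighborFinset u, x w := by
  rw [← sum_subset (inter_subset_left (s₂ := W.toFinset))
    fun w hw hw' => hx w (by simpa [hw] using hw'), ← map_neighborFinset_induce, sum_map]
  rfl

lemma eq_zero_of_mem_eigenspace_lapMatrix {R : Type*} [CommRing R]
    (hW : (G.induce W).IsAcyclic) (hdeg : ∀ u, 0 < (G.induce W).degree u)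
    (root : (G.induce W).ConnectedComponent → W)
    (hroot : ∀ C, (G.induce W).connectedComponentMk (root C) = C) {μ : R} {x : V → R}
    (hx : x ∈ eigenspace (Matrix.toLin' (G.lapMatrix R)) μ) (hxW : ∀ v ∉ W, x v = 0)
    (hleaf : ∀ u, (G.induce W).degree u = 1 → u ∉ Set.range root → x u = 0) : x = 0 := by
  have hxW' : (fun u : W => x u) = 0 := by
    refine hW.eq_zero_of_forall_degree_eq_one hdeg root hroot (fun u hu => ?_) hleaf
    have := congrFun (mem_eigenspace_iff.1 hx) u
    rw [Matrix.toLin'_apply, lapMatrix_mulVec_apply, Pi.smul_apply, hu] at this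
    rw [sum_neighborFinset_induce G hxW]
    simpa using this
  funext v
  by_cases hv : v ∈ W
  · exact congrFun hxW' ⟨v, hv⟩
  · exact hxW v hv

lemma ncard_setOf_ncard_neighborSet_inter_eq_one :
    {v | v ∈ W ∧ (G.neighborSet v ∩ W).ncard = 1}.ncard = #{u | (G.induce W).degree u = 1} := by
  rw [← card_map (.subtype (· ∈ W)), ← Set.ncard_coe_finset]
  congr 1
  ext v
  simp [degree_induce_eq_ncard, and_comm]

end InducedForest

end SimpleGraph

lemma Finset.card_compl_union_map_sdiff {V : Type*} [Fintype V] [DecidableEq V] (W : Set V)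
    [DecidablePred (· ∈ W)] {L R : Finset W} (hRL : R ⊆ L) :
    #(W.toFinsetᶜ ∪ (L \ R).map (.subtype (· ∈ W))) + W.ncard + #R = Fintype.card V + #L := by
  have hdisj : Disjoint W.toFinsetᶜ ((L \ R).map (.subtype (· ∈ W))) := by
    rw [disjoint_left]
    intro v hv hv'
    obtain ⟨u, -, rfl⟩ := mem_map.1 hv'
    exact mem_compl.1 hv (Set.mem_toFinset.2 u.2)
  rw [card_union_of_disjoint hdisj, card_map, card_sdiff_of_subset hRL, card_compl,
    Set.ncard_eq_toFinset_card']
  have := card_le_card hRL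
  have := card_le_univ W.toFinset
  omega

theorem number_of_distinct_laplacian_eigenvalues_general {V : Type*} [Fintype V]
    [DecidableEq V] [Nonempty V] (G : SimpleGraph V) [DecidableRel G.Adj]
    (ε : ℝ) (hε1 : ε < 1)
    (W : Set V)
    (hforest : (G.induce W).IsAcyclic)
    (hniso : ∀ v ∈ W, (G.neighborSet v ∩ W).Nonempty)
    (l c : ℕ)
    (hl : l = {v | v ∈ W ∧ (G.neighborSet v ∩ W).ncard = 1}.ncard)
    (hc : c = Nat.card (G.induce W).ConnectedComponent)
    (hbig : (W.ncard : ℝ) - l + c ≥ ε * Fintype.card V) :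
    (({μ : ℝ | Module.End.HasEigenvalue (Matrix.toLin' (G.lapMatrix ℝ)) μ}.ncard : ℝ))
      ≥ 1 / (1 - ε) := by
  classical
  have hdeg : ∀ u : W, 0 < (G.induce W).degree u := fun u => by
    rw [degree_induce_eq_ncard]
    exact (Set.ncard_pos (Set.toFinite _)).2 (hniso u u.2)
  choose root hroot hroot_leaf using hforest.exists_degree_eq_one hdeg
  let L : Finset W := {u | (G.induce W).degree u = 1}
  let S : Finset V := W.toFinsetᶜ ∪ (L \ univ.image root).map (.subtype (· ∈ W))
  have hS : ∀ μ, ∀ x ∈ eigenspace (Matrix.toLin' (G.lapMatrix ℝ)) μ,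
      (∀ v ∈ S, x v = 0) → x = 0 := fun μ x hx hxS =>
    G.eq_zero_of_mem_eigenspace_lapMatrix hforest hdeg root hroot hx
      (fun v hv => hxS v (by simp [S, hv]))
      (fun u hu hr => hxS u (by simp_all [S, L]))
  have hRL : univ.image root ⊆ L := by
    simpa [L, subset_iff] using hroot_leaf
  have hcard := card_compl_union_map_sdiff W hRL
  rw [card_image_of_injective _ (Function.LeftInverse.injective hroot), card_univ,
    ← Nat.card_eq_fintype_card, ← hc, ← ncard_setOf_ncard_neighborSet_inter_eq_one, ← hl] at hcard
  have hcount := (G.isHermitian_lapMatrix ℝ).card_le_ncard_setOf_hasEigenvalue_mul_card S hS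
  have hn : (0 : ℝ) < Fintype.card V := by exact_mod_cast Fintype.card_pos
  rw [ge_iff_le, div_le_iff₀ (sub_pos.2 hε1)]
  have hcard' : (#S : ℝ) + W.ncard + c = Fintype.card V + l := by exact_mod_cast hcard
  have hcount' : (Fintype.card V : ℝ) ≤
      {μ : ℝ | HasEigenvalue (Matrix.toLin' (G.lapMatrix ℝ)) μ}.ncard * #S := by
    exact_mod_cast hcount
  nlinarith

/-- Number of distinct eigenvalues: let `0 < ε < 1` and let `W` be an induced
forest of `G` without isolated vertices, with `l` leaves and `c` connected
components, such that `|W| - l + c ≥ ε |V|`.  Then the number `ℓ` of distinct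
Laplacian eigenvalues of `G` satisfies `ℓ ≥ 1 / (1 - ε)`. -/
theorem number_of_distinct_laplacian_eigenvalues {V : Type*} [Fintype V]
    [DecidableEq V] [Nonempty V] (G : SimpleGraph V) [DecidableRel G.Adj]
    (ε : ℝ) (hε0 : 0 < ε) (hε1 : ε < 1)
    (W : Set V)
    (hforest : (G.induce W).IsAcyclic)
    (hniso : ∀ v ∈ W, (G.neighborSet v ∩ W).Nonempty)
    (l c : ℕ)
    (hl : l = {v | v ∈ W ∧ (G.neighborSet v ∩ W).ncard = 1}.ncard)
    (hc : c = Nat.card (G.induce W).ConnectedComponent)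
    (hbig : (W.ncard : ℝ) - l + c ≥ ε * Fintype.card V) :
    (({μ : ℝ | Module.End.HasEigenvalue (Matrix.toLin' (G.lapMatrix ℝ)) μ}.ncard : ℝ))
      ≥ 1 / (1 - ε) :=
  number_of_distinct_laplacian_eigenvalues_general G ε hε1 W hforest hniso l c hl hc hbig
end
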